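/- Let l, b ≥ 1, let m = l·b, let F = GaloisField 2 l, and let t = 2^{m−1} + 1. Suppose p : Fin t → F[X] is a family of polynomials such that each p i has natural degree exactly b and IsCoprime (p i) (p j) whenever i ≠ j. Define f : (Fin (2b) → F) → ZMod 2 by f(x) = 1 if and only if Φ_{p i}(x) = 0 for some i (so in particular f(0) = 1), and f(x) = 0 otherwise. Then f is bent: for every a : Fin (2b) → F, (W_f(a))² = 2^{2m}. (This is the PS⁺ case of the LRS construction: the support of f is the union of the kernels of the Φ_{p i}.) -/

import Mathlib

/-- The linear map determined by the linear recurring sequence with feedback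
polynomial `p` (of natural degree at most `b`):
`(Phi b p x) i = ∑_{j=0}^{b} (coeff of X^j in p) * x (i + j)`. -/
noncomputable def Phi {K : Type*} [Field K] (b : ℕ) (p : Polynomial K) :
    (Fin (2 * b) → K) →ₗ[K] (Fin b → K) where
  toFun x i := ∑ j : Fin (b + 1),
    p.coeff j * x ⟨i.1 + j.1, by have h1 := i.2; have h2 := j.2; omega⟩
  map_add' x y := by
    funext i
    simp [mul_add, Finset.sum_add_distrib]
  map_smul' c x := by
    funext i
    simp only [Pi.smul_apply, smul_eq_mul, RingHom.id_apply, Finset.mul_sum]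
    exact Finset.sum_congr rfl fun j _ => by ring

noncomputable instance (l : ℕ) : Fintype (GaloisField 2 l) := Fintype.ofFinite _

/-!
Pairing a sequence `x` with a polynomial `r` by `⟪x, r⟫ = ∑ₖ xₖ rₖ` gives `(Φ_p x)ᵢ = ⟪x, Xⁱ p⟫`,
so `x ∈ ker Φ_p` is orthogonal to every `u p` with `deg u < b`. For coprime `p, q` of degree `b`
every polynomial of degree `< 2b` is some `u p + v q` with `deg u, deg v < b`, so the kernels of
`Φ_p` and `Φ_q` meet in `0`; similarly `x ∈ ker Φ_p` is determined by its first `b` entries, and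
the kernels are complementary `b`-dimensional subspaces.

The support of `f` is therefore the union of `t = 2^(m-1) + 1` pairwise complementary subgroups
`Kᵢ` of order `2^m`, and its indicator is `∑ᵢ 1_{Kᵢ} - (t - 1) δ₀`. Write `ψ x = ∑ⱼ Tr(aⱼ xⱼ)` and
`χ_ψ = (-1)^ψ`. A character sum over a subgroup is its order or `0`, and
`W_f(ψ) = ∑ χ_ψ - 2 ∑ᵢ ∑_{Kᵢ} χ_ψ + 2^m`. For `ψ = 0` this is `-2^m`;
otherwise `∑ χ_ψ = 0` and at most one `Kᵢ` lies in `ker ψ` (two would span everything), so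
`W_f(ψ) = ±2^m`.
-/

open Finset Polynomial Function

section LinearRecurrence

variable {K : Type*} [Field K]

lemma degree_lt_of_degree_mul_lt {u p : K[X]} {d : WithBot ℕ} (hp : p ≠ 0)
    (h : (u * p).degree < d + p.degree) : u.degree < d := by
  rwa [degree_mul, WithBot.add_lt_add_iff_right (degree_ne_bot.mpr hp)] at h

lemma exists_mul_add_eq_of_degree_lt {p r : K[X]} {n : ℕ} (hp : p ≠ 0)
    (hr : r.degree < n + p.degree) :
    ∃ u v : K[X], u.degree < n ∧ v.degree < p.degree ∧ u * p + v = r := by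
  have hdiv : r / p * p + r % p = r := by rw [mul_comm]; exact EuclideanDomain.div_add_mod r p
  refine ⟨r / p, r % p, degree_lt_of_degree_mul_lt hp ?_, degree_mod_lt r hp, hdiv⟩
  rw [eq_sub_of_add_eq hdiv]
  exact (degree_sub_le _ _).trans_lt <| max_lt hr <|
    (degree_mod_lt r hp).trans_le (le_add_of_nonneg_left (WithBot.coe_nonneg.mpr n.zero_le))

lemma exists_mul_add_mul_eq_of_isCoprime {p q r : K[X]} (hpq : IsCoprime p q)
    (hr : r.degree < p.degree + q.degree) :
    ∃ u v : K[X], u.degree < q.degree ∧ v.degree < p.degree ∧ u * p + v * q = r := by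
  obtain ⟨s, t, hst⟩ := hpq
  have hp : p ≠ 0 := by rintro rfl; simp at hr
  have hq : q ≠ 0 := by rintro rfl; simp at hr
  have hdiv := EuclideanDomain.div_add_mod (r * s) q
  have hsum : r * s % q * p + (r * s / q * p + r * t) * q = r := by
    linear_combination p * hdiv + r * hst
  refine ⟨r * s % q, r * s / q * p + r * t, degree_mod_lt _ hq,
    degree_lt_of_degree_mul_lt hq ?_, hsum⟩
  rw [eq_sub_of_add_eq' hsum]
  refine (degree_sub_le _ _).trans_lt <| max_lt hr ?_
  rw [degree_mul, add_comm p.degree]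
  exact WithBot.add_lt_add_right (degree_ne_bot.mpr hp) (degree_mod_lt _ hq)

noncomputable def seqPairing {n : ℕ} (x : Fin n → K) : K[X] →ₗ[K] K :=
  ∑ k : Fin n, x k • lcoeff K k

lemma seqPairing_apply {n : ℕ} (x : Fin n → K) (r : K[X]) :
    seqPairing x r = ∑ k : Fin n, x k * r.coeff k := by
  simp [seqPairing]

lemma seqPairing_X_pow {n : ℕ} (x : Fin n → K) (k : Fin n) :
    seqPairing x (X ^ (k : ℕ)) = x k := by
  simp [seqPairing_apply, coeff_X_pow, Fin.val_inj]

lemma eq_zero_of_forall_seqPairing_eq_zero {n : ℕ} {x : Fin n → K}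
    (h : ∀ r : K[X], r.degree < n → seqPairing x r = 0) : x = 0 :=
  funext fun k => by
    rw [← seqPairing_X_pow x k, Pi.zero_apply]
    exact h _ (by rw [degree_X_pow]; exact_mod_cast k.2)

variable {b : ℕ} {p q : K[X]}

lemma Phi_apply_eq_seqPairing (hp : p.natDegree ≤ b) (x : Fin (2 * b) → K) (i : Fin b) :
    Phi b p x i = seqPairing x (X ^ (i : ℕ) * p) := by
  rw [seqPairing_apply]
  simp only [Phi, LinearMap.coe_mk, AddHom.coe_mk, coeff_X_pow_mul']
  refine Fintype.sum_of_injective (fun j : Fin (b + 1) => (⟨i + j, by omega⟩ : Fin (2 * b)))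
    (fun j j' h => Fin.ext (by simpa using h)) _ _ (fun k hk => ?_) (fun j => by simp [mul_comm])
  split_ifs with hik
  · rw [coeff_eq_zero_of_natDegree_lt, mul_zero]
    by_contra! hkb
    exact hk ⟨⟨k - i, by omega⟩, Fin.ext (by simp; omega)⟩
  · rw [mul_zero]

lemma seqPairing_mul_eq_zero_of_Phi_eq_zero {u : K[X]} {x : Fin (2 * b) → K}
    (hp : p.natDegree ≤ b) (hx : Phi b p x = 0) (hu : u.degree < b) :
    seqPairing x (u * p) = 0 := by
  rcases eq_or_ne u 0 with rfl | hu0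
  · simp
  rw [as_sum_range' u b ((natDegree_lt_iff_degree_lt hu0).mpr hu), sum_mul, map_sum]
  refine sum_eq_zero fun i hi => ?_
  rw [← C_mul_X_pow_eq_monomial, mul_assoc, ← smul_eq_C_mul, map_smul,
    ← Phi_apply_eq_seqPairing hp x ⟨i, mem_range.mp hi⟩, hx, Pi.zero_apply, smul_zero]

lemma eq_zero_of_Phi_eq_zero_of_forall_lt (hp : p.degree = b) {x : Fin (2 * b) → K}
    (hx : Phi b p x = 0) (h0 : ∀ k : Fin (2 * b), (k : ℕ) < b → x k = 0) : x = 0 := by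
  have hp0 : p ≠ 0 := by rintro rfl; simp at hp
  refine eq_zero_of_forall_seqPairing_eq_zero fun r hr => ?_
  obtain ⟨u, v, hu, hv, rfl⟩ := exists_mul_add_eq_of_degree_lt (n := b) (r := r) hp0
    (by rwa [hp, ← Nat.cast_add, ← two_mul])
  rw [map_add, seqPairing_mul_eq_zero_of_Phi_eq_zero (natDegree_le_of_degree_le hp.le) hx hu,
    zero_add, seqPairing_apply]
  refine sum_eq_zero fun k _ => ?_
  by_cases hk : (k : ℕ) < b
  · rw [h0 k hk, zero_mul]
  · rw [coeff_eq_zero_of_degree_lt (hv.trans_le (by rw [hp]; exact_mod_cast not_lt.mp hk)),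
      mul_zero]

lemma finrank_ker_Phi (hp : p.degree = b) : Module.finrank K (LinearMap.ker (Phi b p)) = b := by
  let restrict : LinearMap.ker (Phi b p) →ₗ[K] Fin b → K :=
    (LinearMap.funLeft K K (Fin.castLE (by omega))).comp (LinearMap.ker (Phi b p)).subtype
  have hinj : Function.Injective restrict := by
    rw [← LinearMap.ker_eq_bot, Submodule.eq_bot_iff]
    rintro ⟨x, hx⟩ hrx
    refine Subtype.ext (eq_zero_of_Phi_eq_zero_of_forall_lt hp hx fun k hk => ?_)
    simpa [restrict, LinearMap.funLeft] using congrFun hrx ⟨k, hk⟩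
  have hker := LinearMap.finrank_le_finrank_of_injective hinj
  have hrange := Submodule.finrank_le (LinearMap.range (Phi b p))
  have hsum := LinearMap.finrank_range_add_finrank_ker (Phi b p)
  simp only [Module.finrank_fin_fun] at hker hrange hsum
  omega

lemma natCard_ker_Phi [Finite K] (hp : p.degree = b) :
    Nat.card (LinearMap.ker (Phi b p)) = Nat.card K ^ b := by
  rw [Module.natCard_eq_pow_finrank (K := K), finrank_ker_Phi hp]

lemma isCompl_ker_Phi (hp : p.degree = b) (hq : q.degree = b) (hpq : IsCoprime p q) :
    IsCompl (LinearMap.ker (Phi b p)) (LinearMap.ker (Phi b q)) := by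
  refine (Submodule.isCompl_iff_disjoint _ _ ?_).mpr <|
    Submodule.disjoint_def.mpr fun x hxp hxq => eq_zero_of_forall_seqPairing_eq_zero fun r hr => ?_
  · rw [finrank_ker_Phi hp, finrank_ker_Phi hq, Module.finrank_fin_fun]
    omega
  obtain ⟨u, v, hu, hv, rfl⟩ := exists_mul_add_mul_eq_of_isCoprime (r := r) hpq
    (by rwa [hp, hq, ← Nat.cast_add, ← two_mul])
  rw [map_add, seqPairing_mul_eq_zero_of_Phi_eq_zero (natDegree_le_of_degree_le hp.le) hxp
    (hq ▸ hu), seqPairing_mul_eq_zero_of_Phi_eq_zero (natDegree_le_of_degree_le hq.le) hxq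
    (hp ▸ hv), add_zero]

end LinearRecurrence

lemma Submodule.isCompl_toAddSubgroup {R M : Type*} [Ring R] [AddCommGroup M] [Module R M]
    {s t : Submodule R M} (h : IsCompl s t) : IsCompl s.toAddSubgroup t.toAddSubgroup :=
  ⟨AddSubgroup.disjoint_def.mpr fun hx hy => Submodule.disjoint_def.mp h.1 _ hx hy,
    codisjoint_iff.mpr (by rw [← Submodule.sup_toAddSubgroup, h.sup_eq_top]; rfl)⟩

def signChar : AddChar (ZMod 2) ℤ where
  toFun c := if c = 0 then 1 else -1
  map_zero_eq_one' := rfl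
  map_add_eq_mul' := by decide

@[simp]
lemma signChar_one : signChar 1 = -1 := rfl

lemma signChar_eq_one_iff (c : ZMod 2) : signChar c = 1 ↔ c = 0 := by
  revert c; decide

section Walsh

open scoped Classical

variable {V ι : Type*} [AddCommGroup V]

def walshCoeff [Fintype V] (f : V → ZMod 2) (ψ : V →+ ZMod 2) : ℤ :=
  ∑ x, signChar (f x) * signChar (ψ x)

lemma sum_ite_mem_signChar [Fintype V] (ψ : V →+ ZMod 2) (H : AddSubgroup V) :
    ∑ x, (if x ∈ H then signChar (ψ x) else 0) = if H ≤ ψ.ker then (Nat.card H : ℤ) else 0 := by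
  rw [← sum_filter, sum_subtype (p := (· ∈ H)) _ (fun x => by simp) (fun x => signChar (ψ x))]
  have hχ : signChar.compAddMonoidHom (ψ.comp H.subtype) = 0 ↔ H ≤ ψ.ker := by
    simp [AddChar.eq_zero_iff, signChar_eq_one_iff, SetLike.le_def]
  convert (signChar.compAddMonoidHom (ψ.comp H.subtype)).sum_eq_ite using 1
  · rfl
  · simp only [hχ, Nat.card_eq_fintype_card]

lemma sum_ite_mem_eq_ite_exists [Fintype ι] {U : ι → AddSubgroup V}
    (hU : Pairwise (Disjoint on U)) {x : V} (hx : x ≠ 0) :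
    ∑ i, (if x ∈ U i then (1 : ℤ) else 0) = if ∃ i, x ∈ U i then 1 else 0 := by
  split_ifs with h
  · obtain ⟨i, hi⟩ := h
    rw [sum_eq_single i (fun j _ hji => if_neg fun hj => hx ?_) (by simp), if_pos hi]
    exact AddSubgroup.disjoint_def.mp (hU hji) hj hi
  · push Not at h
    exact sum_eq_zero fun i _ => if_neg (h i)

lemma eq_zero_of_isCompl_le_ker {ψ : V →+ ZMod 2} {H H' : AddSubgroup V} (hHH' : IsCompl H H')
    (hH : H ≤ ψ.ker) (hH' : H' ≤ ψ.ker) : ψ = 0 := by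
  have htop : ⊤ ≤ ψ.ker := hHH'.sup_eq_top ▸ sup_le hH hH'
  ext x
  exact htop (AddSubgroup.mem_top x)

variable [Fintype ι]

lemma signChar_eq_of_support_eq_iUnion {U : ι → AddSubgroup V} (hU : Pairwise (Disjoint on U))
    {N : ℕ} (hι : 2 * Fintype.card ι = N + 2) {f : V → ZMod 2}
    (hf : ∀ x, f x = 1 ↔ ∃ i, x ∈ U i) (x : V) :
    signChar (f x) = 1 - 2 * ∑ i, (if x ∈ U i then 1 else 0) + if x = 0 then (N : ℤ) else 0 := by
  rcases eq_or_ne x 0 with rfl | hx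
  · have : Nonempty ι := Fintype.card_pos_iff.mp (by omega)
    have hf0 : f 0 = 1 := (hf 0).mpr ⟨Classical.arbitrary ι, zero_mem _⟩
    have hι' : 2 * (Fintype.card ι : ℤ) = N + 2 := by exact_mod_cast hι
    simp only [hf0, signChar_one, zero_mem, if_true, sum_const, card_univ, nsmul_one]
    linear_combination hι'
  · rw [sum_ite_mem_eq_ite_exists hU hx, if_neg hx]
    obtain h | h : f x = 0 ∨ f x = 1 := by generalize f x = c; revert c; decide
    all_goals simp [h, ← hf]

theorem walshCoeff_sq_of_support_eq_iUnion [Fintype V] (ψ : V →+ ZMod 2)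
    {U : ι → AddSubgroup V} {N : ℕ} (hU : ∀ i, Nat.card (U i) = N) (hV : Nat.card V = N ^ 2)
    (hcompl : Pairwise fun i j => IsCompl (U i) (U j)) (hι : 2 * Fintype.card ι = N + 2)
    {f : V → ZMod 2} (hf : ∀ x, f x = 1 ↔ ∃ i, x ∈ U i) :
    walshCoeff f ψ ^ 2 = N ^ 2 := by
  have hsplit : walshCoeff f ψ
      = ∑ x, (if x ∈ (⊤ : AddSubgroup V) then signChar (ψ x) else 0)
        - 2 * ∑ i, ∑ x, (if x ∈ U i then signChar (ψ x) else 0) + N := by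
    simp only [walshCoeff,
      signChar_eq_of_support_eq_iUnion (fun i j h => (hcompl h).disjoint) hι hf,
      add_mul, sub_mul, one_mul, sum_add_distrib, sum_sub_distrib, sum_mul, mul_sum, ite_mul,
      zero_mul, mul_assoc, AddSubgroup.mem_top, if_true, sum_ite_eq', mem_univ, map_zero]
    rw [sum_comm]
    simp [AddChar.map_zero_eq_one]
  have hι' : 2 * (Fintype.card ι : ℤ) = N + 2 := by exact_mod_cast hι
  simp only [hsplit, sum_ite_mem_signChar, hU, hV, AddSubgroup.card_top]
  rcases eq_or_ne ψ 0 with rfl | hψ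
  · simp only [AddMonoidHom.ker_zero, le_top, if_true, sum_const, card_univ, nsmul_eq_mul]
    push_cast
    linear_combination (2 * Fintype.card ι - (N : ℤ)) * N ^ 2 * hι'
  · have htop : ¬ (⊤ : AddSubgroup V) ≤ ψ.ker := fun h =>
      hψ (eq_zero_of_isCompl_le_ker isCompl_top_bot h bot_le)
    have hT : #{i | U i ≤ ψ.ker} ≤ 1 := card_le_one.mpr fun i hi j hj => by
      by_contra hij
      exact hψ (eq_zero_of_isCompl_le_ker (hcompl hij) (mem_filter.mp hi).2 (mem_filter.mp hj).2)
    rw [if_neg htop, ← sum_filter, sum_const, nsmul_eq_mul]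
    interval_cases #{i | U i ≤ ψ.ker} <;> ring

end Walsh

/-- The PS⁺ case of the LRS construction: given `t = 2^(l*b - 1) + 1` pairwise
coprime polynomials of natural degree exactly `b` over `F = GaloisField 2 l`,
the Boolean function whose support is the union of the kernels of the
associated LRS linear maps (so `f 0 = 1`) is bent: every Walsh–Hadamard
coefficient squares to `2^(2*m)` where `m = l*b`. -/
theorem lrs_psPlus_bent (l b : ℕ) (hl : 1 ≤ l) (hb : 1 ≤ b)
    (p : Fin (2 ^ (l * b - 1) + 1) → Polynomial (GaloisField 2 l))
    (hdeg : ∀ i, (p i).natDegree = b)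
    (hcop : ∀ i j, i ≠ j → IsCoprime (p i) (p j))
    (f : (Fin (2 * b) → GaloisField 2 l) → ZMod 2)
    (hf : ∀ x, f x = 1 ↔ ∃ i, Phi b (p i) x = 0) :
    ∀ a : Fin (2 * b) → GaloisField 2 l,
      ((∑ x : Fin (2 * b) → GaloisField 2 l,
          (if f x = 0 then (1 : ℤ) else -1) *
            (if (∑ j, Algebra.trace (ZMod 2) (GaloisField 2 l) (a j * x j)) = 0
              then (1 : ℤ) else -1)) ^ 2) = 2 ^ (2 * (l * b)) := by
  intro a
  have hm : 1 ≤ l * b := Nat.one_le_iff_ne_zero.mpr (by positivity)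
  have hcardF : Nat.card (GaloisField 2 l) = 2 ^ l := GaloisField.card 2 l (by omega)
  have hdeg' (i) : (p i).degree = b := (degree_eq_iff_natDegree_eq_of_pos hb).mpr (hdeg i)
  let ψ : (Fin (2 * b) → GaloisField 2 l) →+ ZMod 2 :=
    AddMonoidHom.mk' (fun x => ∑ j, Algebra.trace (ZMod 2) (GaloisField 2 l) (a j * x j))
      fun x y => by simp [mul_add, sum_add_distrib]
  rw [show 2 * (l * b) = l * b * 2 by ring, pow_mul]
  refine walshCoeff_sq_of_support_eq_iUnion ψ
    (U := fun i => (LinearMap.ker (Phi b (p i))).toAddSubgroup) (fun i => ?_) ?_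
    (fun i j hij => Submodule.isCompl_toAddSubgroup (isCompl_ker_Phi (hdeg' i) (hdeg' j)
      (hcop i j hij))) ?_ (by simpa using hf)
  · exact (natCard_ker_Phi (hdeg' i)).trans (by rw [hcardF, ← pow_mul])
  · rw [Nat.card_fun, hcardF, Nat.card_eq_fintype_card, Fintype.card_fin, ← pow_mul, ← pow_mul]
    ring_nf
  · rw [Fintype.card_fin, mul_add, ← pow_succ', Nat.sub_add_cancel hm]
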